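/- Let active be a finite set of coins, hc a finite set of address–coin pairs, C_a = {c : (a,c) ∈ hc}, with V_≤ = |M_Least| and V_≥ = |M_Inact| + |M_Pairs| − |M_Most| (error sets as in the coin encoding). Suppose V_≤ = 0 or V_≥ = 0. Then Σ_a |C_a| = |active| if and only if V_≤ = 0 and V_≥ = 0, which holds if and only if the invariants hold: every owned coin is active, every active coin is owned, and no coin is owned by two distinct addresses. -/

import Mathlib

/-!
Counting the ownership pairs `hc` by coin, a coin owned once contributes one pair and a coin in
`M_Most` contributes its pairs in `M_Pairs`, of which there are at least two. Hence
`Σ_a |C_a| + |M_Most| = |owned coins| + |M_Pairs|`, and comparing the owned coins with `active`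
gives `Σ_a |C_a| - |active| = V_≥ - V_≤`, with `V_≥ ≥ |M_Inact| + |M_Most| ≥ 0`. So the balance
equation says `V_≤ = V_≥`, which under the hypothesis means both vanish, and `V_≥ = 0` says exactly
that `M_Inact` and `M_Most` are empty.
-/

open Finset

namespace Finset

variable {α β : Type*} [DecidableEq β] {s : Finset (α × β)}

theorem sum_card_eq_card_of_mem_iff [DecidableEq α] {C : α → Finset β}
    (hC : ∀ a c, c ∈ C a ↔ (a, c) ∈ s) : ∑ a ∈ s.image Prod.fst, #(C a) = #s := by
  rw [card_eq_sum_card_fiberwise fun p hp => mem_image_of_mem Prod.fst hp]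
  refine sum_congr rfl fun a _ => ?_
  have hfiber : {p ∈ s | p.1 = a} = (C a).image (Prod.mk a) := by
    ext ⟨b, c⟩
    simp only [mem_filter, mem_image, hC, Prod.mk.injEq]
    constructor
    · rintro ⟨h, rfl⟩
      exact ⟨c, h, rfl, rfl⟩
    · rintro ⟨c, h, rfl, rfl⟩
      exact ⟨h, rfl⟩
  rw [hfiber, card_image_of_injective _ (Prod.mk_right_injective a)]

variable {M : Finset β} (hM : ∀ c, c ∈ M ↔ ∃ a b, a ≠ b ∧ (a, c) ∈ s ∧ (b, c) ∈ s)
include hM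

theorem eq_filter_snd_mem_of_mem_iff {P : Finset (α × β)}
    (hP : ∀ a c, (a, c) ∈ P ↔ (a, c) ∈ s ∧ ∃ b, b ≠ a ∧ (b, c) ∈ s) :
    P = {p ∈ s | p.2 ∈ M} := by
  ext ⟨a, c⟩
  rw [hP, mem_filter, hM]
  constructor
  · rintro ⟨ha, b, hba, hb⟩
    exact ⟨ha, b, a, hba, hb, ha⟩
  · rintro ⟨ha, b, b', hbb', hb, hb'⟩
    by_cases hba : b = a
    · exact ⟨ha, b', fun h => hbb' (hba.trans h.symm), hb'⟩
    · exact ⟨ha, b, hba, hb⟩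

theorem card_add_card_shared_eq :
    #s + #M = #(s.image Prod.snd) + #{p ∈ s | p.2 ∈ M} := by
  have hsub : M ⊆ s.image Prod.snd := fun c hc => by
    obtain ⟨a, -, -, ha, -⟩ := (hM c).1 hc
    exact mem_image_of_mem Prod.snd ha
  have himage : {p ∈ s | p.2 ∉ M}.image Prod.snd = s.image Prod.snd \ M := by
    ext c
    simp [and_comm]
  have hinj : Set.InjOn Prod.snd (↑{p ∈ s | p.2 ∉ M} : Set (α × β)) := by
    rintro ⟨a, c⟩ hac ⟨b, c'⟩ hbc (rfl : c = c')
    obtain ⟨ha, hcM⟩ := mem_filter.1 hac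
    have hb := (mem_filter.1 hbc).1
    by_contra hab
    exact hcM ((hM c).2 ⟨a, b, fun h => hab (by rw [h]), ha, hb⟩)
  have hunique : #{p ∈ s | p.2 ∉ M} = #(s.image Prod.snd \ M) := by
    rw [← himage, card_image_of_injOn hinj]
  have hsplit := card_filter_add_card_filter_not (s := s) (fun p => p.2 ∈ M)
  have hsdiff := card_sdiff_add_card_eq_card hsub
  omega

theorem two_mul_card_shared_le : 2 * #M ≤ #{p ∈ s | p.2 ∈ M} := by
  have himage : {p ∈ s | p.2 ∈ M}.image Prod.snd = M := by
    ext c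
    simp only [mem_image, mem_filter, Prod.exists]
    constructor
    · rintro ⟨a, c, ⟨-, hc⟩, rfl⟩
      exact hc
    · intro hc
      obtain ⟨a, -, -, ha, -⟩ := (hM c).1 hc
      exact ⟨a, c, ⟨ha, hc⟩, rfl⟩
  conv_lhs => rw [← himage]
  refine mul_card_image_le_card _ 2 fun c hc => ?_
  rw [himage] at hc
  obtain ⟨a, b, hab, ha, hb⟩ := (hM c).1 hc
  exact one_lt_card.2 ⟨(a, c), mem_filter.2 ⟨mem_filter.2 ⟨ha, hc⟩, rfl⟩,
    (b, c), mem_filter.2 ⟨mem_filter.2 ⟨hb, hc⟩, rfl⟩, by simp [hab]⟩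

theorem card_sdiff_add_card_shared_sub_eq_zero_iff (A : Finset β) :
    (#(s.image Prod.snd \ A) : ℤ) + #{p ∈ s | p.2 ∈ M} - #M = 0 ↔
      (∀ a c, (a, c) ∈ s → c ∈ A) ∧ (∀ a b c, (a, c) ∈ s → (b, c) ∈ s → a = b) := by
  have hfunctional : (∀ a b c, (a, c) ∈ s → (b, c) ∈ s → a = b) ↔ M = ∅ := by
    simp only [eq_empty_iff_forall_notMem, hM]
    grind
  have hsubset : (∀ a c, (a, c) ∈ s → c ∈ A) ↔ s.image Prod.snd \ A = ∅ := by
    simp only [sdiff_eq_empty_iff_subset, subset_iff, mem_image, Prod.exists]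
    grind
  rw [hfunctional, hsubset]
  have := two_mul_card_shared_le hM
  constructor
  · intro h
    exact ⟨card_eq_zero.1 (by omega), card_eq_zero.1 (by omega)⟩
  · rintro ⟨hA, rfl⟩
    simp [hA]

end Finset

theorem stmt6 {Address Coin : Type*} [DecidableEq Address] [DecidableEq Coin]
    (active : Finset Coin) (hc : Finset (Address × Coin))
    (C : Address → Finset Coin) (hC : ∀ a c, c ∈ C a ↔ (a, c) ∈ hc)
    (MInact MLeast MMost : Finset Coin) (MPairs : Finset (Address × Coin))
    (hInact : ∀ c, c ∈ MInact ↔ (c ∉ active ∧ ∃ a, c ∈ C a))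
    (hLeast : ∀ c, c ∈ MLeast ↔ (c ∈ active ∧ ∀ a, c ∉ C a))
    (hMost : ∀ c, c ∈ MMost ↔ ∃ a b, a ≠ b ∧ c ∈ C a ∧ c ∈ C b)
    (hPairs : ∀ a c, (a, c) ∈ MPairs ↔ (c ∈ C a ∧ ∃ b, b ≠ a ∧ c ∈ C b))
    (hOne : MLeast.card = 0 ∨ (MInact.card : ℤ) + MPairs.card - MMost.card = 0) :
    ((∑ a ∈ hc.image Prod.fst, (C a).card = active.card) ↔
      (MLeast.card = 0 ∧ (MInact.card : ℤ) + MPairs.card - MMost.card = 0)) ∧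
    ((MLeast.card = 0 ∧ (MInact.card : ℤ) + MPairs.card - MMost.card = 0) ↔
      ((∀ a c, c ∈ C a → c ∈ active) ∧ (∀ c ∈ active, ∃ a, c ∈ C a) ∧
        (∀ a b c, c ∈ C a → c ∈ C b → a = b))) := by
  rw [sum_card_eq_card_of_mem_iff hC]
  simp only [hC] at hInact hLeast hMost hPairs ⊢
  obtain rfl : MInact = hc.image Prod.snd \ active := by ext c; simp [hInact, and_comm]
  obtain rfl : MLeast = active \ hc.image Prod.snd := by ext c; simp [hLeast]
  obtain rfl := eq_filter_snd_mem_of_mem_iff hMost hPairs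
  have hcount := card_add_card_shared_eq hMost
  have hownedUnion := card_sdiff_add_card (hc.image Prod.snd) active
  have hactiveUnion := card_sdiff_add_card active (hc.image Prod.snd)
  rw [union_comm] at hactiveUnion
  have hdeficit : #(active \ hc.image Prod.snd) = 0 ↔ ∀ c ∈ active, ∃ a, (a, c) ∈ hc := by
    simp [sdiff_eq_empty_iff_subset, subset_iff]
  have hexcess := card_sdiff_add_card_shared_sub_eq_zero_iff hMost active
  refine ⟨⟨fun h => ?_, fun h => ?_⟩, by rw [hdeficit, hexcess]; tauto⟩ <;> omega
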